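/- Let n be a power of 2 and let f, g ∈ R[x] be polynomials of degree strictly less than n over a commutative ring R. Then f·g = Σ_{k=0}^{n−1} σ_k · S_{n−1−k} · ( (S_{n−1−k}·x^k) ⊙ (S_k·f̄) ⊙ (S_k·ḡ) ), where f̄ = σ ⊙ f and ḡ = σ ⊙ g. -/

import Mathlib

/-- The signed Thue–Morse sequence: `σ n = (-1)^(Hamming weight of n)`. -/
noncomputable def sgn (R : Type*) [CommRing R] (n : ℕ) : R := (-1) ^ (Nat.digits 2 n).sum

/-- The Sierpiński polynomial `S m = ∏_{j≥0} (1 + X^(2^j))^(d_j m)` where `d_j m` is the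
`j`-th binary digit of `m`. -/
noncomputable def Sier (R : Type*) [CommRing R] (m : ℕ) : Polynomial R :=
  ∏ j ∈ Finset.range (m + 1), if m.testBit j then 1 + Polynomial.X ^ (2 ^ j) else 1

/-- Termwise (Hadamard) product of polynomials. -/
noncomputable def hadP {R : Type*} [CommRing R] (p q : Polynomial R) : Polynomial R :=
  ∑ n ∈ p.support, Polynomial.C (p.coeff n * q.coeff n) * Polynomial.X ^ n

/-- `σ ⊙ p`: termwise product of a polynomial with the signed Thue–Morse sequence. -/
noncomputable def barP {R : Type*} [CommRing R] (p : Polynomial R) : Polynomial R :=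
  ∑ n ∈ p.support, Polynomial.C (sgn R n * p.coeff n) * Polynomial.X ^ n

/-!
Both sides are bilinear in `(f, g)`, so it suffices to treat `f = X ^ a`, `g = X ^ b` with
`a, b < n = 2 ^ t`. The coefficients of `S m` are `1` exactly at the binary submasks `i &&& m = i`
of `m`; hence the triple Hadamard product in the `k`-th summand is `X ^ (k ||| a)` if
`k ||| a = k ||| b` and `0` otherwise, and multiplying by `S (n - 1 - k)` adds every exponent `r`
disjoint from `k`. The resulting double sum over `(k, r)` factors over the binary digits, and the
one-digit case is a direct check; it equals `σ a * σ b * X ^ (a + b)`, and the signs cancel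
against those coming from `f̄` and `ḡ`.
-/

namespace Nat

theorem add_eq_or_of_and_eq_zero {a b : ℕ} (h : a &&& b = 0) : a + b = a ||| b := by
  induction a using Nat.strongRecOn generalizing b with
  | ind a ih =>
    rcases a.eq_zero_or_pos with rfl | ha
    · simp
    have hdiv : a / 2 + b / 2 = (a ||| b) / 2 := by
      rw [or_div_two]; exact ih (a / 2) (by omega) (by rw [← and_div_two, h])
    have hmod : ¬(a % 2 = 1 ∧ b % 2 = 1) := by rw [← and_mod_two_eq_one, h]; simp
    have := or_mod_two_eq_one (a := a) (b := b)
    omega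

theorem le_of_and_eq_left {a b : ℕ} (h : a &&& b = a) : a ≤ b := h ▸ and_le_right

theorem sub_eq_xor_of_and_eq_left {d m : ℕ} (h : d &&& m = d) : m - d = m ^^^ d := by
  have hdisj : d &&& (m ^^^ d) = 0 := by simp only [eq_iff_testBit_eq] at *; grind
  have hunion : d ||| (m ^^^ d) = m := by simp only [eq_iff_testBit_eq] at *; grind
  have := add_eq_or_of_and_eq_zero hdisj
  omega

theorem and_two_pow_sub_one_eq_self_iff {m t : ℕ} : m &&& (2 ^ t - 1) = m ↔ m < 2 ^ t := by
  rw [and_two_pow_sub_one_eq_mod, mod_eq_iff_lt (by positivity)]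

theorem and_sub_eq_self_iff {k r N : ℕ} (hk : k &&& N = k) :
    r &&& (N - k) = r ↔ r &&& N = r ∧ r &&& k = 0 := by
  rw [sub_eq_xor_of_and_eq_left hk]
  simp only [eq_iff_testBit_eq] at *; grind

theorem le_and_sub_and_sub_eq_iff {k m N : ℕ} (hk : k &&& N = k) :
    k ≤ m ∧ (m - k) &&& (N - k) = m - k ↔ k &&& m = k ∧ m &&& N = m := by
  rw [sub_eq_xor_of_and_eq_left hk]
  constructor
  · rintro ⟨hkm, hj⟩
    have hdisj : (m - k) &&& k = 0 := by simp only [eq_iff_testBit_eq] at *; grind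
    have hm : m = (m - k) ||| k := by rw [← add_eq_or_of_and_eq_zero hdisj]; omega
    generalize m - k = j at hm hj
    subst hm
    simp only [eq_iff_testBit_eq] at *; grind
  · rintro ⟨hkm, hmN⟩
    refine ⟨le_of_and_eq_left hkm, ?_⟩
    rw [sub_eq_xor_of_and_eq_left hkm]
    simp only [eq_iff_testBit_eq] at *; grind

theorem le_and_sub_and_eq_iff_eq_or {k m a : ℕ} (hkm : k &&& m = k) :
    a ≤ m ∧ (m - a) &&& k = m - a ↔ m = k ||| a := by
  constructor
  · rintro ⟨ham, hj⟩
    have hjm : (m - a) &&& m = m - a := by simp only [eq_iff_testBit_eq] at *; grind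
    have ha : a = m ^^^ (m - a) := by rw [← sub_eq_xor_of_and_eq_left hjm]; omega
    generalize m - a = j at ha hj
    subst ha
    simp only [eq_iff_testBit_eq] at *; grind
  · rintro rfl
    have ham : a &&& (k ||| a) = a := by simp only [eq_iff_testBit_eq]; grind
    refine ⟨le_of_and_eq_left ham, ?_⟩
    rw [sub_eq_xor_of_and_eq_left ham]
    simp only [eq_iff_testBit_eq]; grind

theorem or_eq_two_mul_add (a b : ℕ) : a ||| b = 2 * (a / 2 ||| b / 2) + (a % 2 ||| b % 2) := by
  rw [← or_div_two, ← pow_one 2, ← or_mod_two_pow]; omega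

theorem and_eq_two_mul_add (a b : ℕ) :
    a &&& b = 2 * (a / 2 &&& b / 2) + (a % 2 &&& b % 2) := by
  rw [← and_div_two, ← pow_one 2, ← and_mod_two_pow]; omega

theorem two_mul_add_and_eq_self_iff {i u m : ℕ} (hu : u < 2) :
    (2 * i + u) &&& m = 2 * i + u ↔ i &&& m / 2 = i ∧ u &&& m % 2 = u := by
  have : u &&& m % 2 < 2 := and_le_left.trans_lt hu
  rw [and_eq_two_mul_add, Nat.mul_add_div two_pos, Nat.mul_add_mod, Nat.div_eq_of_lt hu,
    Nat.mod_eq_of_lt hu, Nat.add_zero]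
  omega

end Nat

theorem Finset.sum_range_two_mul {M : Type*} [AddCommMonoid M] (N : ℕ) (f : ℕ → M) :
    ∑ i ∈ range (2 * N), f i = ∑ i ∈ range N, ∑ u ∈ range 2, f (2 * i + u) := by
  induction N with
  | zero => simp
  | succ N ih =>
    rw [mul_add_one, sum_range_succ, sum_range_succ, sum_range_succ, ← ih]
    simp [sum_range_succ, add_assoc]

section Sgn

variable {R : Type*} [CommRing R]

@[simp] theorem sgn_zero : sgn R 0 = 1 := by simp [sgn]

@[simp] theorem sgn_one : sgn R 1 = -1 := by simp [sgn]

theorem sgn_eq_mod_two_mul_div_two (n : ℕ) : sgn R n = sgn R (n % 2) * sgn R (n / 2) := by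
  rcases n.eq_zero_or_pos with rfl | hn
  · simp
  rw [sgn, Nat.digits_def' one_lt_two hn, List.sum_cons, pow_add, sgn]
  rcases Nat.mod_two_eq_zero_or_one n with h | h <;> simp [h, sgn]

theorem sgn_mul_self (n : ℕ) : sgn R n * sgn R n = 1 := by
  rw [sgn, ← pow_add, ← two_mul, pow_mul, neg_one_sq, one_pow]

theorem map_sgn {S : Type*} [CommRing S] (φ : R →+* S) (n : ℕ) : φ (sgn R n) = sgn S n := by
  simp [sgn]

end Sgn

section MonoTerm

open Finset

variable {S : Type*} [CommRing S]

/-- The contribution of the pair `(k, r)` in the monomial case `f = X ^ a`, `g = X ^ b`. -/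
noncomputable def monoTerm (y : S) (a b k r : ℕ) : S :=
  if k ||| a = k ||| b ∧ r &&& k = 0 then sgn S k * y ^ ((k ||| a) + r) else 0

theorem monoTerm_eq_mod_two_mul_div_two (y : S) (a b k r : ℕ) :
    monoTerm y a b k r = monoTerm y (a % 2) (b % 2) (k % 2) (r % 2) *
      monoTerm (y ^ 2) (a / 2) (b / 2) (k / 2) (r / 2) := by
  have hbit : ∀ x z : ℕ, x % 2 ||| z % 2 < 2 := fun x z =>
    Nat.or_lt_two_pow (n := 1) (x.mod_lt two_pos) (z.mod_lt two_pos)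
  have := hbit k a
  have := hbit k b
  have : r % 2 &&& k % 2 < 2 := Nat.and_le_left.trans_lt (r.mod_lt two_pos)
  unfold monoTerm
  rw [Nat.or_eq_two_mul_add k a, Nat.or_eq_two_mul_add k b, Nat.and_eq_two_mul_add r k,
    sgn_eq_mod_two_mul_div_two k]
  by_cases hlo : k % 2 ||| a % 2 = k % 2 ||| b % 2 ∧ r % 2 &&& k % 2 = 0
  · by_cases hhi : k / 2 ||| a / 2 = k / 2 ||| b / 2 ∧ r / 2 &&& k / 2 = 0
    · rw [if_pos (by omega), if_pos hlo, if_pos hhi, ← pow_mul, mul_mul_mul_comm, ← pow_add]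
      congr 2
      omega
    · rw [if_neg (by omega), if_neg hhi, mul_zero]
  · rw [if_neg (by omega), if_neg hlo, zero_mul]

theorem sum_monoTerm (y : S) (s : Finset ℕ) (a b k : ℕ) :
    ∑ r ∈ s, monoTerm y a b k r =
      if k ||| a = k ||| b then sgn S k * y ^ (k ||| a) * ∑ r ∈ s with r &&& k = 0, y ^ r
      else 0 := by
  simp only [monoTerm, ite_and, sum_ite_irrel, sum_const_zero, sum_filter, mul_sum, pow_add,
    mul_assoc, mul_ite, mul_zero]

theorem sum_sum_monoTerm_of_lt_two (y : S) {a b : ℕ} (ha : a < 2) (hb : b < 2) :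
    ∑ k ∈ range 2, ∑ r ∈ range 2, monoTerm y a b k r = sgn S a * sgn S b * y ^ (a + b) := by
  interval_cases a <;> interval_cases b <;> simp [monoTerm, sum_range_succ]

theorem sum_sum_monoTerm (t : ℕ) (y : S) {a b : ℕ} (ha : a < 2 ^ t) (hb : b < 2 ^ t) :
    ∑ k ∈ range (2 ^ t), ∑ r ∈ range (2 ^ t), monoTerm y a b k r =
      sgn S a * sgn S b * y ^ (a + b) := by
  induction t generalizing y a b with
  | zero => simp_all [monoTerm]
  | succ t ih =>
    rw [pow_succ'] at ha hb ⊢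
    have hsplit : ∑ k ∈ range (2 * 2 ^ t), ∑ r ∈ range (2 * 2 ^ t), monoTerm y a b k r =
        ∑ k ∈ range (2 ^ t), ∑ κ ∈ range 2, ∑ r ∈ range (2 ^ t), ∑ ρ ∈ range 2,
          monoTerm y (a % 2) (b % 2) κ ρ * monoTerm (y ^ 2) (a / 2) (b / 2) k r := by
      simp only [sum_range_two_mul, monoTerm_eq_mod_two_mul_div_two y a b]
      refine sum_congr rfl fun k _ => sum_congr rfl fun κ hκ =>
        sum_congr rfl fun r _ => sum_congr rfl fun ρ hρ => ?_
      rw [mem_range] at hκ hρ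
      congr 2 <;> omega
    have hfactor : ∀ c d : ℕ → ℕ → S,
        ∑ k ∈ range (2 ^ t), ∑ κ ∈ range 2, ∑ r ∈ range (2 ^ t), ∑ ρ ∈ range 2,
          c κ ρ * d k r =
        (∑ κ ∈ range 2, ∑ ρ ∈ range 2, c κ ρ) *
          ∑ k ∈ range (2 ^ t), ∑ r ∈ range (2 ^ t), d k r := by
      intro c d
      simp only [sum_mul_sum]
      rw [sum_comm]
      exact sum_congr rfl fun _ _ => sum_congr rfl fun _ _ => sum_comm
    rw [hsplit, hfactor, sum_sum_monoTerm_of_lt_two y (a.mod_lt two_pos) (b.mod_lt two_pos),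
      ih (y ^ 2) (by omega) (by omega), sgn_eq_mod_two_mul_div_two a,
      sgn_eq_mod_two_mul_div_two b, ← pow_mul,
      show a + b = (a % 2 + b % 2) + 2 * (a / 2 + b / 2) by omega, pow_add]
    ring

end MonoTerm

section Hadamard

open Polynomial Finset

variable {R : Type*} [CommRing R]

@[simp] theorem coeff_hadP (p q : R[X]) (n : ℕ) : (hadP p q).coeff n = p.coeff n * q.coeff n := by
  simp only [hadP, finsetSum_coeff, coeff_C_mul_X_pow, sum_ite_eq, mem_support_iff]
  split_ifs with h <;> simp_all

@[simp] theorem coeff_barP (p : R[X]) (n : ℕ) : (barP p).coeff n = sgn R n * p.coeff n := by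
  simp only [barP, finsetSum_coeff, coeff_C_mul_X_pow, sum_ite_eq, mem_support_iff]
  split_ifs with h <;> simp_all

theorem hadP_sum_left {ι : Type*} (s : Finset ι) (p : ι → R[X]) (q : R[X]) :
    hadP (∑ i ∈ s, p i) q = ∑ i ∈ s, hadP (p i) q := by
  ext n; simp [sum_mul]

theorem hadP_sum_right {ι : Type*} (s : Finset ι) (p : R[X]) (q : ι → R[X]) :
    hadP p (∑ i ∈ s, q i) = ∑ i ∈ s, hadP p (q i) := by
  ext n; simp [mul_sum]

theorem hadP_smul_left (c : R) (p q : R[X]) : hadP (c • p) q = c • hadP p q := by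
  ext n; simp [mul_assoc]

theorem hadP_smul_right (c : R) (p q : R[X]) : hadP p (c • q) = c • hadP p q := by
  ext n; simp [mul_left_comm]

theorem barP_sum {ι : Type*} (s : Finset ι) (p : ι → R[X]) :
    barP (∑ i ∈ s, p i) = ∑ i ∈ s, barP (p i) := by
  ext n; simp [mul_sum]

theorem barP_smul (c : R) (p : R[X]) : barP (c • p) = c • barP p := by
  ext n; simp [mul_left_comm]

theorem barP_X_pow (a : ℕ) : barP (X ^ a : R[X]) = sgn R a • X ^ a := by
  ext n; by_cases h : n = a <;> simp [coeff_X_pow, h]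

end Hadamard

section Sierpinski

open Polynomial Finset

variable {R : Type*} [CommRing R]

theorem prod_ite_testBit_eq_sum {S : Type*} [CommRing S] (J m : ℕ) (y : S) :
    ∏ j ∈ range J, (if m.testBit j then 1 + y ^ 2 ^ j else 1) =
      ∑ i ∈ range (2 ^ J), if i &&& m = i then y ^ i else 0 := by
  induction J generalizing m y with
  | zero => simp
  | succ J ih =>
    have hy : ∀ j, y ^ 2 ^ (j + 1) = (y ^ 2) ^ 2 ^ j := fun j => by rw [← pow_mul, pow_succ']
    rw [prod_range_succ', pow_succ', sum_range_two_mul]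
    simp only [Nat.testBit_add_one, hy, ih (m / 2) (y ^ 2), sum_mul]
    refine sum_congr rfl fun i _ => ?_
    simp only [sum_range_succ, sum_range_zero, zero_add,
      Nat.two_mul_add_and_eq_self_iff two_pos, Nat.two_mul_add_and_eq_self_iff one_lt_two]
    rcases Nat.mod_two_eq_zero_or_one m with h | h <;> by_cases hi : i &&& m / 2 = i <;>
      simp [h, hi, pow_add, pow_mul, mul_add, Nat.testBit_zero]

theorem coeff_Sier (m n : ℕ) : (Sier R m).coeff n = if n &&& m = n then 1 else 0 := by
  rw [Sier, prod_ite_testBit_eq_sum, ← sum_filter, finsetSum_coeff]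
  simp only [coeff_X_pow, sum_ite_eq, mem_filter, mem_range]
  refine if_congr (and_iff_right_of_imp fun h => ?_) rfl rfl
  exact (Nat.le_of_and_eq_left h).trans_lt
    (Nat.lt_two_pow_self.trans (Nat.pow_lt_pow_right one_lt_two m.lt_succ_self))

theorem coeff_Sier_mul_X_pow (M e n : ℕ) :
    (Sier R M * X ^ e).coeff n = if e ≤ n ∧ (n - e) &&& M = n - e then 1 else 0 := by
  rw [coeff_mul_X_pow', coeff_Sier, ite_and]

theorem Sier_two_pow_sub_one_sub {t k : ℕ} (hk : k < 2 ^ t) :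
    Sier R (2 ^ t - 1 - k) = ∑ r ∈ range (2 ^ t) with r &&& k = 0, X ^ r := by
  ext n
  rw [coeff_Sier, finsetSum_coeff]
  simp only [coeff_X_pow, sum_ite_eq, mem_filter, mem_range,
    Nat.and_sub_eq_self_iff (Nat.and_two_pow_sub_one_eq_self_iff.2 hk),
    Nat.and_two_pow_sub_one_eq_self_iff]

theorem hadP_hadP_Sier_mul_X_pow {t k a : ℕ} (hk : k < 2 ^ t) (ha : a < 2 ^ t) (b : ℕ) :
    hadP (hadP (Sier R (2 ^ t - 1 - k) * X ^ k) (Sier R k * X ^ a)) (Sier R k * X ^ b) =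
      if k ||| a = k ||| b then X ^ (k ||| a) else 0 := by
  ext m
  simp only [coeff_hadP, coeff_Sier_mul_X_pow, ite_zero_mul_ite_zero, mul_one,
    apply_ite (coeff · m), coeff_X_pow, coeff_zero, ← ite_and]
  refine if_congr ?_ rfl rfl
  rw [Nat.le_and_sub_and_sub_eq_iff (Nat.and_two_pow_sub_one_eq_self_iff.2 hk),
    Nat.and_two_pow_sub_one_eq_self_iff]
  constructor
  · rintro ⟨⟨⟨hkm, -⟩, hA⟩, hB⟩
    rw [Nat.le_and_sub_and_eq_iff_eq_or hkm] at hA hB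
    exact ⟨hA ▸ hB, hA⟩
  · rintro ⟨hab, rfl⟩
    have hkm : k &&& (k ||| a) = k := by simp only [Nat.eq_iff_testBit_eq]; grind
    exact ⟨⟨⟨hkm, Nat.or_lt_two_pow hk ha⟩, (Nat.le_and_sub_and_eq_iff_eq_or hkm).2 rfl⟩,
      (Nat.le_and_sub_and_eq_iff_eq_or hkm).2 hab⟩

end Sierpinski

section Convolution

open Polynomial Finset

noncomputable def sierpinskiConv (R : Type*) [CommRing R] (n : ℕ) (f g : R[X]) : R[X] :=
  ∑ k ∈ range n, sgn R k • (Sier R (n - 1 - k) *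
    hadP (hadP (Sier R (n - 1 - k) * X ^ k) (Sier R k * barP f)) (Sier R k * barP g))

variable {R : Type*} [CommRing R]

theorem eq_sum_smul_X_pow_of_degree_lt {p : R[X]} {n : ℕ} (hp : p.degree < n) :
    p = ∑ i ∈ range n, p.coeff i • X ^ i := by
  ext m
  simp only [finsetSum_coeff, coeff_smul, coeff_X_pow, smul_eq_mul, mul_ite, mul_one, mul_zero,
    sum_ite_eq, mem_range]
  split_ifs with hm
  · rfl
  · exact coeff_eq_zero_of_degree_lt (hp.trans_le (by exact_mod_cast not_lt.1 hm))

theorem sierpinskiConv_sum_smul (n : ℕ) {ι κ : Type*} (s : Finset ι) (s' : Finset κ)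
    (c : ι → R) (d : κ → R) (p : ι → R[X]) (q : κ → R[X]) :
    sierpinskiConv R n (∑ i ∈ s, c i • p i) (∑ j ∈ s', d j • q j) =
      ∑ i ∈ s, ∑ j ∈ s', (c i * d j) • sierpinskiConv R n (p i) (q j) := by
  simp only [sierpinskiConv, barP_sum, barP_smul, mul_sum, mul_smul_comm, hadP_sum_left,
    hadP_sum_right, hadP_smul_left, hadP_smul_right, smul_sum, smul_smul]
  rw [sum_comm]
  refine (sum_congr rfl fun j _ => sum_comm).trans ?_
  rw [sum_comm]
  refine sum_congr rfl fun i _ => sum_congr rfl fun j _ => sum_congr rfl fun k _ => ?_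
  rw [mul_comm (c i * d j), mul_comm (d j)]

theorem sierpinskiConv_X_pow_X_pow {t a b : ℕ} (ha : a < 2 ^ t) (hb : b < 2 ^ t) :
    sierpinskiConv R (2 ^ t) (X ^ a) (X ^ b) = X ^ a * X ^ b := by
  have hterm : ∀ k ∈ range (2 ^ t), sgn R k • (Sier R (2 ^ t - 1 - k) *
      hadP (hadP (Sier R (2 ^ t - 1 - k) * X ^ k) (Sier R k * barP (X ^ a)))
        (Sier R k * barP (X ^ b))) =
      (sgn R a * sgn R b) • ∑ r ∈ range (2 ^ t), monoTerm X a b k r := by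
    intro k hk
    simp only [barP_X_pow, mul_smul_comm, hadP_smul_right, hadP_smul_left]
    rw [hadP_hadP_Sier_mul_X_pow (mem_range.1 hk) ha, sum_monoTerm,
      ← Sier_two_pow_sub_one_sub (mem_range.1 hk)]
    split_ifs
    · simp only [smul_eq_C_mul, ← map_sgn (C : R →+* R[X]), map_mul]
      ring
    · simp
  have hsq : ∀ n, C (sgn R n) * C (sgn R n) = 1 := fun n => by
    rw [← map_mul, sgn_mul_self, map_one]
  rw [sierpinskiConv, sum_congr rfl hterm, ← smul_sum, sum_sum_monoTerm t X ha hb,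
    ← map_sgn C, ← map_sgn C, smul_eq_C_mul, map_mul, pow_add]
  linear_combination (X ^ a * X ^ b) * (C (sgn R b) * C (sgn R b) * hsq a + hsq b)

end Convolution

/-- For n a power of 2 and polynomials f, g of degree < n,
f * g = Σ_{k=0}^{n-1} σ k * S (n-1-k) * ((S (n-1-k) * x^k) ⊙ (S k * f̄) ⊙ (S k * ḡ)),
where f̄ = σ ⊙ f and ḡ = σ ⊙ g. -/
theorem convolution_formula_bar (R : Type*) [CommRing R] (n : ℕ)
    (hn : ∃ t : ℕ, n = 2 ^ t) (f g : Polynomial R)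
    (hf : f.degree < n) (hg : g.degree < n) :
    f * g = ∑ k ∈ Finset.range n,
      sgn R k • (Sier R (n - 1 - k) *
        hadP (hadP (Sier R (n - 1 - k) * Polynomial.X ^ k) (Sier R k * barP f))
          (Sier R k * barP g)) := by
  obtain ⟨t, rfl⟩ := hn
  change f * g = sierpinskiConv R (2 ^ t) f g
  rw [eq_sum_smul_X_pow_of_degree_lt hf, eq_sum_smul_X_pow_of_degree_lt hg,
    sierpinskiConv_sum_smul, Finset.sum_mul_sum]
  refine Finset.sum_congr rfl fun a ha => Finset.sum_congr rfl fun b hb => ?_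
  rw [smul_mul_smul_comm,
    sierpinskiConv_X_pow_X_pow (Finset.mem_range.1 ha) (Finset.mem_range.1 hb)]
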